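/- arXiv:0910.3104 — 2 statements merged into one kernel-verified Lean document; each statement's English description precedes it below -/
import Mathlib

section
/- For c > 0, the set O_c⁺ = {X ∈ sl₂(ℝ) : det X = c, x₁ > 0} (where x₁ is the i-component of X in the basis i,j',k') is preserved by the adjoint action of SL₂(ℝ), and the adjoint action of SL₂(ℝ) on O_c⁺ is transitive. -/
/-!
Write `c = s²` with `s > 0`. Every `X ∈ O_c⁺` is conjugate to `s • i` by `g = s - X i`: by
Cayley–Hamilton `X² = -s²`, whence `g (s i) = X g`, and `det g = 2s² + s (X₁₀ - X₀₁) > 0`.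
Conversely, conjugating `s • i` by any `b` with `det b > 0` gives a traceless matrix of
determinant `s²` whose `i`-component is `s ‖b‖² / (2 det b) > 0`. So `O_c⁺` is the orbit of
`s • i` under matrices of positive determinant, and rescaling such a matrix by `(det b)^(-1/2)`
puts it in `SL₂(ℝ)` without changing its action.
-/

open Matrix

/-- The sheet `O_c⁺`: traceless matrices of determinant `c` with positive
`i`-component `x₁ = (X₁₀ - X₀₁)/2`. -/
def Ocplus (c : ℝ) : Set (Matrix (Fin 2) (Fin 2) ℝ) :=
  {X | X.trace = 0 ∧ X.det = c ∧ 0 < (X 1 0 - X 0 1) / 2}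

lemma Matrix.conj_mul_conj {n R : Type*} [Fintype n] [DecidableEq n] [CommRing R]
    (a g M : Matrix n n R) : (a * g) * M * (a * g)⁻¹ = a * (g * M * g⁻¹) * a⁻¹ := by
  simp only [mul_inv_rev, mul_assoc]

lemma Matrix.mul_self_eq_neg_det_smul_one_of_trace_eq_zero {R : Type*} [CommRing R]
    [Nontrivial R] {M : Matrix (Fin 2) (Fin 2) R} (h : M.trace = 0) :
    M * M = -(M.det • 1) := by
  have := aeval_self_charpoly M
  rw [charpoly_fin_two, h] at this
  simpa [sq, Algebra.algebraMap_eq_smul_one, add_eq_zero_iff_eq_neg] using this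

noncomputable def sl2i : Matrix (Fin 2) (Fin 2) ℝ := !![0, -1; 1, 0]

lemma sl2i_mul_self : sl2i * sl2i = -1 := by
  ext i j
  fin_cases i <;> fin_cases j <;> simp [sl2i, mul_apply]

lemma mul_sl2i (X : Matrix (Fin 2) (Fin 2) ℝ) :
    X * sl2i = !![X 0 1, -X 0 0; X 1 1, -X 1 0] := by
  ext i j
  fin_cases i <;> fin_cases j <;> simp [sl2i, mul_apply]

lemma mul_sl2i_mul_adjugate_sub (b : Matrix (Fin 2) (Fin 2) ℝ) :
    (b * sl2i * adjugate b) 1 0 - (b * sl2i * adjugate b) 0 1 =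
      b 0 0 ^ 2 + b 0 1 ^ 2 + b 1 0 ^ 2 + b 1 1 ^ 2 := by
  simp only [mul_sl2i, adjugate_fin_two, mul_apply, Fin.sum_univ_two, of_apply, cons_val',
    cons_val_zero, cons_val_one, cons_val_fin_one, Fin.isValue]
  ring

section PositiveDeterminant

variable {b : Matrix (Fin 2) (Fin 2) ℝ}

lemma conj_smul_sl2i_mem_Ocplus (hb : 0 < b.det) {s : ℝ} (hs : 0 < s) :
    b * (s • sl2i) * b⁻¹ ∈ Ocplus (s ^ 2) := by
  have hunit : IsUnit b := (isUnit_iff_isUnit_det b).mpr hb.ne'.isUnit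
  refine ⟨?_, ?_, ?_⟩
  · simp [trace_conj hunit, sl2i, trace_fin_two]
  · simp [det_conj hunit, sl2i, det_fin_two, sq]
  · have hsum : 0 < b 0 0 ^ 2 + b 0 1 ^ 2 + b 1 0 ^ 2 + b 1 1 ^ 2 := by
      rw [det_fin_two] at hb
      nlinarith [sq_nonneg (b 0 0 - b 1 1), sq_nonneg (b 0 1 + b 1 0)]
    have hconj : b * (s • sl2i) * b⁻¹ = (s * b.det⁻¹) • (b * sl2i * adjugate b) := by
      rw [inv_def, Ring.inverse_eq_inv', mul_smul_comm, mul_smul_comm, smul_mul_assoc,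
        smul_smul, mul_comm]
    rw [hconj, Matrix.smul_apply, Matrix.smul_apply, smul_eq_mul, smul_eq_mul, ← mul_sub,
      mul_sl2i_mul_adjugate_sub]
    positivity

lemma exists_det_eq_one_conj_eq (hb : 0 < b.det) (Z : Matrix (Fin 2) (Fin 2) ℝ) :
    ∃ a : Matrix (Fin 2) (Fin 2) ℝ, a.det = 1 ∧ a * Z * a⁻¹ = b * Z * b⁻¹ := by
  have ht : 0 < √b.det := Real.sqrt_pos.mpr hb
  refine ⟨(√b.det)⁻¹ • b, ?_, ?_⟩
  · rw [det_smul, Fintype.card_fin, inv_pow, Real.sq_sqrt hb.le, inv_mul_cancel₀ hb.ne']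
  · have hinv : ((√b.det)⁻¹ • b)⁻¹ = (√b.det)⁻¹⁻¹ • b⁻¹ :=
      inv_eq_left_inv (by rw [smul_mul_smul_comm, inv_mul_cancel₀ (inv_ne_zero ht.ne'),
        nonsing_inv_mul _ hb.ne'.isUnit, one_smul])
    rw [hinv, smul_mul_assoc, smul_mul_assoc, mul_smul_comm, smul_smul, inv_inv,
      inv_mul_cancel₀ ht.ne', one_smul]

end PositiveDeterminant

lemma exists_conj_smul_sl2i_eq {s : ℝ} (hs : 0 < s) {X : Matrix (Fin 2) (Fin 2) ℝ}
    (hX : X ∈ Ocplus (s ^ 2)) :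
    ∃ g : Matrix (Fin 2) (Fin 2) ℝ, 0 < g.det ∧ g * (s • sl2i) * g⁻¹ = X := by
  obtain ⟨htr, hdet, hx⟩ := hX
  set g : Matrix (Fin 2) (Fin 2) ℝ := s • 1 - X * sl2i
  have hg : g.det = 2 * s ^ 2 + s * (X 1 0 - X 0 1) := by
    rw [det_fin_two X] at hdet
    rw [det_fin_two]
    simp only [g, mul_sl2i, Matrix.sub_apply, Matrix.smul_apply, one_apply_eq, one_apply_ne,
      smul_eq_mul, of_apply, cons_val', cons_val_zero, cons_val_one, cons_val_fin_one,
      Fin.isValue, ne_eq, zero_ne_one, one_ne_zero, not_false_eq_true]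
    linear_combination hdet
  have hgpos : 0 < g.det := by rw [hg]; nlinarith
  have hX2 : X * X = -(s ^ 2 • 1) := by
    rw [← hdet]
    exact mul_self_eq_neg_det_smul_one_of_trace_eq_zero htr
  have hintertwine : g * (s • sl2i) = X * g := calc
    g * (s • sl2i) = s ^ 2 • sl2i + s • X := by
      simp only [g, sub_mul, smul_mul_assoc, one_mul, mul_smul_comm, mul_assoc, sl2i_mul_self,
        mul_neg, mul_one]
      module
    _ = X * g := by
      simp only [g, mul_sub, mul_smul_comm, mul_one, ← mul_assoc, hX2, neg_mul, smul_mul_assoc,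
        one_mul]
      module
  exact ⟨g, hgpos, by rw [hintertwine, mul_nonsing_inv_cancel_right _ _ hgpos.ne'.isUnit]⟩

/-- For `c > 0`, the sheet `O_c⁺` is preserved by the adjoint action of
`SL₂(ℝ)`, and this action on `O_c⁺` is transitive. -/
theorem stmt_13 (c : ℝ) (hc : 0 < c) :
    (∀ a X : Matrix (Fin 2) (Fin 2) ℝ, a.det = 1 → X ∈ Ocplus c →
      a * X * a⁻¹ ∈ Ocplus c) ∧
    (∀ X Y : Matrix (Fin 2) (Fin 2) ℝ, X ∈ Ocplus c → Y ∈ Ocplus c →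
      ∃ a : Matrix (Fin 2) (Fin 2) ℝ, a.det = 1 ∧ a * X * a⁻¹ = Y) := by
  obtain ⟨s, hs, rfl⟩ : ∃ s, 0 < s ∧ s ^ 2 = c :=
    ⟨√c, Real.sqrt_pos.mpr hc, Real.sq_sqrt hc.le⟩
  refine ⟨fun a X ha hX => ?_, fun X Y hX hY => ?_⟩
  · obtain ⟨g, hg, rfl⟩ := exists_conj_smul_sl2i_eq hs hX
    rw [← conj_mul_conj]
    exact conj_smul_sl2i_mem_Ocplus (by rwa [det_mul, ha, one_mul]) hs
  · obtain ⟨g, hg, rfl⟩ := exists_conj_smul_sl2i_eq hs hX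
    obtain ⟨h, hh, rfl⟩ := exists_conj_smul_sl2i_eq hs hY
    have hpos : 0 < (h * g⁻¹).det := by
      rw [det_mul, det_nonsing_inv, Ring.inverse_eq_inv']
      positivity
    obtain ⟨a, ha, hconj⟩ := exists_det_eq_one_conj_eq hpos (g * (s • sl2i) * g⁻¹)
    refine ⟨a, ha, ?_⟩
    rw [hconj, ← conj_mul_conj, nonsing_inv_mul_cancel_right _ _ hg.ne'.isUnit]
end

section
/- Every positive solution y of the ODE y'' − (y')²/(2y) + 2y = 0 on an interval is of the form y(u) = A·cos²(u + u₀) for some constants A > 0 and u₀ ∈ ℝ (on an interval where cos(u+u₀) ≠ 0). Conversely, every such function satisfies the ODE. -/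
open Real

/-!
If `y > 0` solves the equation, then `z = √y` solves `z'' = -z`, because
`y'' - y'²/(2y) + 2y = 2z(z'' + z)`. On an interval `z cos - z' sin` and `z sin + z' cos` are
constant, so `z = α cos + β sin = C cos(u + u₀)` and `y = C² cos²(u + u₀)`. The converse is a
direct computation.
-/

section HarmonicOscillator

variable {s : Set ℝ} {z w : ℝ → ℝ}

lemma hasDerivAt_mul_cos_sub_mul_sin {u : ℝ} (hz : HasDerivAt z (w u) u)
    (hw : HasDerivAt w (-z u) u) :
    HasDerivAt (fun t => z t * cos t - w t * sin t) 0 u :=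
  ((hz.fun_mul (hasDerivAt_cos u)).fun_sub (hw.fun_mul (hasDerivAt_sin u))).congr_deriv (by ring)

lemma hasDerivAt_mul_sin_add_mul_cos {u : ℝ} (hz : HasDerivAt z (w u) u)
    (hw : HasDerivAt w (-z u) u) :
    HasDerivAt (fun t => z t * sin t + w t * cos t) 0 u :=
  ((hz.fun_mul (hasDerivAt_sin u)).fun_add (hw.fun_mul (hasDerivAt_cos u))).congr_deriv (by ring)

lemma IsOpen.exists_is_const_of_hasDerivAt_zero {f : ℝ → ℝ} (hs : IsOpen s)
    (hs' : IsPreconnected s) (hf : ∀ u ∈ s, HasDerivAt f 0 u) : ∃ c, ∀ u ∈ s, f u = c :=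
  hs.exists_is_const_of_deriv_eq_zero hs'
    (fun u hu => (hf u hu).differentiableAt.differentiableWithinAt)
    (fun u hu => (hf u hu).deriv)

/-- The identity `z = (z cos - w sin) cos + (z sin + w cos) sin` with both brackets constant. -/
lemma IsOpen.exists_eq_mul_cos_add_mul_sin (hs : IsOpen s) (hs' : IsPreconnected s)
    (hz : ∀ u ∈ s, HasDerivAt z (w u) u) (hw : ∀ u ∈ s, HasDerivAt w (-z u) u) :
    ∃ α β : ℝ, ∀ u ∈ s, z u = α * cos u + β * sin u := by
  obtain ⟨α, hα⟩ := hs.exists_is_const_of_hasDerivAt_zero hs'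
    fun u hu => hasDerivAt_mul_cos_sub_mul_sin (hz u hu) (hw u hu)
  obtain ⟨β, hβ⟩ := hs.exists_is_const_of_hasDerivAt_zero hs'
    fun u hu => hasDerivAt_mul_sin_add_mul_cos (hz u hu) (hw u hu)
  refine ⟨α, β, fun u hu => ?_⟩
  rw [← hα u hu, ← hβ u hu]
  linear_combination (-z u) * sin_sq_add_cos_sq u

end HarmonicOscillator

/-- The amplitude and phase are the modulus and argument of `α - β i`. -/
lemma exists_mul_cos_add_eq (α β : ℝ) :
    ∃ C θ : ℝ, ∀ u, α * cos u + β * sin u = C * cos (u + θ) := by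
  let x : ℂ := ⟨α, -β⟩
  refine ⟨‖x‖, Complex.arg x, fun u => ?_⟩
  have hcos : ‖x‖ * cos (Complex.arg x) = α := Complex.norm_mul_cos_arg x
  have hsin : ‖x‖ * sin (Complex.arg x) = -β := Complex.norm_mul_sin_arg x
  rw [cos_add]
  linear_combination (-cos u) * hcos + sin u * hsin

lemma hasDerivAt_div_two_sqrt {y y' : ℝ → ℝ} {y'' u : ℝ} (hy : 0 < y u)
    (hy' : HasDerivAt y (y' u) u) (hy'' : HasDerivAt y' y'' u)
    (hode : y'' - y' u ^ 2 / (2 * y u) + 2 * y u = 0) :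
    HasDerivAt (fun t => y' t / (2 * √(y t))) (-√(y u)) u := by
  have hsqrt : 0 < √(y u) := sqrt_pos.mpr hy
  refine (hy''.fun_div ((hy'.sqrt hy.ne').const_mul 2) (by positivity)).congr_deriv ?_
  have hsq : √(y u) ^ 2 = y u := sq_sqrt hy.le
  rw [← hsq] at hode
  field_simp at hode ⊢
  linear_combination hode

lemma IsOpen.exists_eq_mul_cos_sq_of_ode {s : Set ℝ} (hs : IsOpen s) (hs' : IsPreconnected s)
    {y : ℝ → ℝ} (hpos : ∀ u ∈ s, 0 < y u) (hdy : ∀ u ∈ s, DifferentiableAt ℝ y u)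
    (hdy' : ∀ u ∈ s, DifferentiableAt ℝ (deriv y) u)
    (hode : ∀ u ∈ s, deriv (deriv y) u - (deriv y u) ^ 2 / (2 * y u) + 2 * y u = 0) :
    ∃ A > (0 : ℝ), ∃ u₀ : ℝ, ∀ u ∈ s, y u = A * cos (u + u₀) ^ 2 := by
  obtain ⟨α, β, hsqrt⟩ := hs.exists_eq_mul_cos_add_mul_sin hs'
    (z := fun u => √(y u)) (w := fun u => deriv y u / (2 * √(y u)))
    (fun u hu => (hdy u hu).hasDerivAt.sqrt (hpos u hu).ne')
    (fun u hu => hasDerivAt_div_two_sqrt (hpos u hu) (hdy u hu).hasDerivAt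
      (hdy' u hu).hasDerivAt (hode u hu))
  obtain ⟨C, θ, hCθ⟩ := exists_mul_cos_add_eq α β
  have hy : ∀ u ∈ s, y u = C ^ 2 * cos (u + θ) ^ 2 := fun u hu => by
    rw [← sq_sqrt (hpos u hu).le, hsqrt u hu, hCθ, mul_pow]
  rcases s.eq_empty_or_nonempty with rfl | ⟨c, hc⟩
  · exact ⟨1, one_pos, 0, fun u hu => hu.elim⟩
  · have hyc := hpos c hc
    rw [hy c hc] at hyc
    exact ⟨C ^ 2, pos_of_mul_pos_left hyc (sq_nonneg _), θ, hy⟩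

lemma hasDerivAt_mul_cos_sq (A u₀ u : ℝ) :
    HasDerivAt (fun s => A * cos (s + u₀) ^ 2) (-A * sin (2 * (u + u₀))) u := by
  refine ((((hasDerivAt_id' u).add_const u₀).cos.fun_pow 2).const_mul A).congr_deriv ?_
  rw [sin_two_mul]
  ring

lemma hasDerivAt_neg_mul_sin_two_mul (A u₀ u : ℝ) :
    HasDerivAt (fun s => -A * sin (2 * (s + u₀))) (-2 * A * cos (2 * (u + u₀))) u := by
  refine ((((hasDerivAt_id' u).add_const u₀).const_mul 2).sin.const_mul (-A)).congr_deriv ?_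
  ring

lemma ode_mul_cos_sq (A u₀ : ℝ) {u : ℝ} (hcos : cos (u + u₀) ≠ 0) :
    deriv (deriv (fun s => A * cos (s + u₀) ^ 2)) u -
        (deriv (fun s => A * cos (s + u₀) ^ 2) u) ^ 2 / (2 * (A * cos (u + u₀) ^ 2)) +
      2 * (A * cos (u + u₀) ^ 2) = 0 := by
  have hderiv : deriv (fun s => A * cos (s + u₀) ^ 2) = fun s => -A * sin (2 * (s + u₀)) :=
    funext fun s => (hasDerivAt_mul_cos_sq A u₀ s).deriv
  rw [hderiv, (hasDerivAt_neg_mul_sin_two_mul A u₀ u).deriv]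
  beta_reduce
  rw [sin_two_mul, cos_two_mul]
  field_simp
  linear_combination (-2 * A) * sin_sq_add_cos_sq (u + u₀)

/-- Positive solutions of `y'' - (y')²/(2y) + 2y = 0` on an open interval are
exactly the functions `u ↦ A cos²(u + u₀)` with `A > 0` (on an interval where
`cos(u + u₀) ≠ 0`). -/
theorem stmt_16 :
    (∀ (a b : ℝ) (y : ℝ → ℝ),
      (∀ u ∈ Set.Ioo a b, 0 < y u) →
      (∀ u ∈ Set.Ioo a b, DifferentiableAt ℝ y u) →
      (∀ u ∈ Set.Ioo a b, DifferentiableAt ℝ (deriv y) u) →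
      (∀ u ∈ Set.Ioo a b,
        deriv (deriv y) u - (deriv y u) ^ 2 / (2 * y u) + 2 * y u = 0) →
      ∃ A > (0 : ℝ), ∃ u₀ : ℝ, ∀ u ∈ Set.Ioo a b,
        y u = A * Real.cos (u + u₀) ^ 2) ∧
    (∀ (A u₀ : ℝ), 0 < A → ∀ u : ℝ, Real.cos (u + u₀) ≠ 0 →
      deriv (deriv (fun s => A * Real.cos (s + u₀) ^ 2)) u -
        (deriv (fun s => A * Real.cos (s + u₀) ^ 2) u) ^ 2 /
          (2 * (A * Real.cos (u + u₀) ^ 2)) +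
        2 * (A * Real.cos (u + u₀) ^ 2) = 0) :=
  ⟨fun _ _ _ => isOpen_Ioo.exists_eq_mul_cos_sq_of_ode isPreconnected_Ioo,
    fun A u₀ _ _ => ode_mul_cos_sq A u₀⟩
end
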